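/- Let G be a finite simple graph with vertex set I and let k = (k_i : i ∈ I) be positive integers. Let G(k) be the join graph obtained by replacing each vertex j by a clique on k_j vertices and joining every vertex of the j-th clique to every vertex of the r-th clique whenever (j,r) ∈ E(G). Fix i ∈ I. Then |B̃^i(k, G)| = (1/k!) · Σ_{r=1}^{k_i} |B̃^{i^r}(1, G(k))|, where k! = Π_j k_j!, B̃^i(k, G) is the set of words in the free partially commutative monoid M(I,G) with letter multiplicities k and initial alphabet {i}, and B̃^{i^r}(1, G(k)) is the set of words in M(V(G(k)), G(k)) using each vertex exactly once with initial alphabet the r-th vertex of the i-th clique. -/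

import Mathlib

/-- The commutation relation on the free monoid: two letters may be exchanged
whenever they are not adjacent in `G`. -/
def traceRel {V : Type*} (G : SimpleGraph V) : FreeMonoid V → FreeMonoid V → Prop :=
  fun x y => ∃ a b : V, ¬ G.Adj a b ∧
    x = FreeMonoid.of a * FreeMonoid.of b ∧ y = FreeMonoid.of b * FreeMonoid.of a

/-- The congruence on the free monoid generated by the commutation relations. -/
def traceCon {V : Type*} (G : SimpleGraph V) : Con (FreeMonoid V) := conGen (traceRel G)

/-- The free partially commutative monoid (trace monoid) `M(I, G)` associated to `G`. -/
abbrev TraceMonoid {V : Type*} (G : SimpleGraph V) := (traceCon G).Quotient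

/-- The element of the trace monoid represented by a list of letters. -/
def traceMk {V : Type*} (G : SimpleGraph V) (L : List V) : TraceMonoid G :=
  (traceCon G).mk' (FreeMonoid.ofList L)

/-- The multiplicity of the letter `i` in the initial alphabet multiset `IA_m(w)`:
the largest `m` such that `w = u · iᵐ`. -/
noncomputable def IAcount {V : Type*} (G : SimpleGraph V) (w : TraceMonoid G) (i : V) : ℕ :=
  sSup {m : ℕ | ∃ u : TraceMonoid G, w = u * (traceMk G [i]) ^ m}

/-- The initial alphabet `IA(w)` of a trace: the set of letters `i` with `w = u · i`. -/
def IAset {V : Type*} (G : SimpleGraph V) (w : TraceMonoid G) : Set V :=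
  {i | ∃ u : TraceMonoid G, w = u * traceMk G [i]}

/-- `B̃ⁱ(k,G)`: traces whose letter multiplicities are given by `k` and whose initial
alphabet (as a set) is `{i}`. -/
def BtildeSet {V : Type*} [DecidableEq V] (G : SimpleGraph V) (k : V → ℕ) (i : V) :
    Set (TraceMonoid G) :=
  {w | ∃ L : List V, traceMk G L = w ∧ (∀ v, L.count v = k v) ∧ IAset G w = {i}}

/-- The join `G(k)` of `G` with respect to `k`: each vertex `j` is replaced by a clique on
`k j` vertices, and all vertices of the `j`-th and `r`-th cliques are joined when
`(j,r) ∈ E(G)`. -/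
def joinGraph {V : Type*} (G : SimpleGraph V) (k : V → ℕ) :
    SimpleGraph (Σ j : V, Fin (k j)) where
  Adj p q := (p.1 = q.1 ∧ p ≠ q) ∨ G.Adj p.1 q.1
  symm := by
    constructor
    rintro p q (⟨h1, h2⟩ | h)
    · exact Or.inl ⟨h1.symm, h2.symm⟩
    · exact Or.inr h.symm
  loopless := by
    constructor
    rintro p (⟨_, h⟩ | h)
    · exact h rfl
    · exact G.irrefl h

/-!
Lift a word of `B̃ⁱ(k, G)` to `G(k)` by numbering the `k j` occurrences of each letter `j`.
A commutation of two distinct non-adjacent letters of `G` lifts to a commutation in `G(k)`, and a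
commutation in `G(k)` projects to a commutation (or to nothing) in `G`; so trace equivalence and
initial alphabets are compatible with the projection `G(k) → G`. Letters of one clique never
commute, so a trace has at most one initial letter per clique and the order of the letters inside
each clique is a trace invariant. Hence the multiplicity-one traces of `G(k)` whose initial
alphabet is a single vertex of the `i`-th clique are exactly the lifts of `B̃ⁱ(k, G)`, any two
lifts of one trace differ by a unique clique-preserving permutation, and `(σ, w) ↦ σ · lift w`
is a bijection from `S_k × B̃ⁱ(k, G)` onto `⋃ᵣ B̃^{iʳ}(1, G(k))`.
-/

open Relation

section Trace

variable {V W : Type*}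

def TraceSwap (G : SimpleGraph V) (L₁ L₂ : List V) : Prop :=
  ∃ u v : List V, ∃ a b : V, ¬ G.Adj a b ∧ L₁ = u ++ a :: b :: v ∧ L₂ = u ++ b :: a :: v

namespace TraceSwap

variable {G : SimpleGraph V} {L₁ L₂ : List V}

theorem symm (h : TraceSwap G L₁ L₂) : TraceSwap G L₂ L₁ := by
  obtain ⟨u, v, a, b, hab, rfl, rfl⟩ := h
  exact ⟨u, v, b, a, fun h => hab h.symm, rfl, rfl⟩

theorem append (h : TraceSwap G L₁ L₂) (x y : List V) :
    TraceSwap G (x ++ L₁ ++ y) (x ++ L₂ ++ y) := by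
  obtain ⟨u, v, a, b, hab, rfl, rfl⟩ := h
  exact ⟨x ++ u, v ++ y, a, b, hab, by simp, by simp⟩

theorem perm (h : TraceSwap G L₁ L₂) : L₁.Perm L₂ := by
  obtain ⟨u, v, a, b, -, rfl, rfl⟩ := h
  exact .append_left u (.swap b a v)

theorem map {G' : SimpleGraph W} {g : V → W} (hg : ∀ a b, ¬ G.Adj a b → ¬ G'.Adj (g a) (g b))
    (h : TraceSwap G L₁ L₂) : TraceSwap G' (L₁.map g) (L₂.map g) := by
  obtain ⟨u, v, a, b, hab, rfl, rfl⟩ := h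
  exact ⟨u.map g, v.map g, g a, g b, hg a b hab, by simp, by simp⟩

theorem filter_eq {s : Set V} [DecidablePred (· ∈ s)] (hs : G.IsClique s)
    (h : TraceSwap G L₁ L₂) : L₁.filter (· ∈ s) = L₂.filter (· ∈ s) := by
  obtain ⟨u, v, a, b, hab, rfl, rfl⟩ := h
  have hba : [a, b].filter (· ∈ s) = [b, a].filter (· ∈ s) := by
    rcases eq_or_ne a b with rfl | hne
    · rfl
    by_cases ha : a ∈ s <;> by_cases hb : b ∈ s <;> simp [ha, hb]
    exact (hab (hs ha hb hne)).elim
  have e : ∀ x y : V, u ++ x :: y :: v = u ++ [x, y] ++ v := by simp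
  rw [e, e]
  simp only [List.filter_append, hba]

instance : Std.Symm (TraceSwap G) := ⟨fun _ _ => symm⟩

end TraceSwap

def swapCon (G : SimpleGraph V) : Con (FreeMonoid V) where
  r x y := ReflTransGen (TraceSwap G) x.toList y.toList
  iseqv := ⟨fun _ => .refl, fun h => Std.Symm.symm _ _ h, .trans⟩
  mul' {a b c d} h₁ h₂ := by
    simp only [FreeMonoid.toList_mul]
    refine (h₁.lift (· ++ c.toList) fun _ _ h => ?_).trans
      (h₂.lift (b.toList ++ ·) fun _ _ h => ?_)
    · simpa using h.append [] c.toList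
    · simpa using h.append b.toList []

variable {G : SimpleGraph V}

theorem traceMk_append (L₁ L₂ : List V) :
    traceMk G (L₁ ++ L₂) = traceMk G L₁ * traceMk G L₂ :=
  map_mul ((traceCon G).mk') (FreeMonoid.ofList L₁) (FreeMonoid.ofList L₂)

theorem traceMk_surjective : Function.Surjective (traceMk G) := fun t => by
  obtain ⟨x, rfl⟩ := Con.mk'_surjective (c := traceCon G) t
  exact ⟨x.toList, rfl⟩

theorem traceMk_eq_iff_reflTransGen {L₁ L₂ : List V} :
    traceMk G L₁ = traceMk G L₂ ↔ ReflTransGen (TraceSwap G) L₁ L₂ := by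
  refine ⟨fun h => ?_, fun h => ?_⟩
  · refine (Con.conGen_le (c := swapCon G)).2 ?_ ((traceCon G).eq.1 h)
    rintro x y ⟨a, b, hab, rfl, rfl⟩
    exact .single ⟨[], [], a, b, hab, rfl, rfl⟩
  · induction h with
    | refl => rfl
    | tail _ hs ih =>
      obtain ⟨u, v, a, b, hab, rfl, rfl⟩ := hs
      have hba : traceMk G [a, b] = traceMk G [b, a] :=
        (traceCon G).eq.2 (ConGen.Rel.of _ _ ⟨a, b, hab, rfl, rfl⟩)
      have e : ∀ x y : V, traceMk G (u ++ x :: y :: v) =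
          traceMk G u * traceMk G [x, y] * traceMk G v := by
        simp [← traceMk_append]
      rw [ih, e, e, hba]

theorem perm_of_traceMk_eq {L₁ L₂ : List V} (h : traceMk G L₁ = traceMk G L₂) :
    L₁.Perm L₂ := by
  have hr := traceMk_eq_iff_reflTransGen.1 h
  clear h
  induction hr with
  | refl => rfl
  | tail _ hs ih => exact ih.trans hs.perm

theorem traceMk_map_eq_of_traceMk_eq {G' : SimpleGraph W} {g : V → W}
    (hg : ∀ a b, ¬ G.Adj a b → ¬ G'.Adj (g a) (g b)) {L₁ L₂ : List V}
    (h : traceMk G L₁ = traceMk G L₂) : traceMk G' (L₁.map g) = traceMk G' (L₂.map g) :=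
  traceMk_eq_iff_reflTransGen.2 <|
    (traceMk_eq_iff_reflTransGen.1 h).lift (List.map g) fun _ _ => TraceSwap.map hg

theorem filter_eq_of_traceMk_eq {s : Set V} [DecidablePred (· ∈ s)] (hs : G.IsClique s)
    {L₁ L₂ : List V} (h : traceMk G L₁ = traceMk G L₂) :
    L₁.filter (· ∈ s) = L₂.filter (· ∈ s) := by
  have hr := traceMk_eq_iff_reflTransGen.1 h
  clear h
  induction hr with
  | refl => rfl
  | tail _ hswap ih => exact ih.trans (hswap.filter_eq hs)

end Trace

section Lift

variable {V W : Type*} {G : SimpleGraph V} {G' : SimpleGraph W} {g : W → V}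

theorem TraceSwap.exists_lift (hg : ∀ x y, g x ≠ g y → ¬ G.Adj (g x) (g y) → ¬ G'.Adj x y)
    {L : List W} {M : List V} (h : TraceSwap G (L.map g) M) :
    ∃ L', ReflTransGen (TraceSwap G') L L' ∧ L'.map g = M := by
  obtain ⟨u, v, a, b, hab, hL, rfl⟩ := h
  obtain ⟨l₁, l₂, rfl, rfl, hl₂⟩ := List.map_eq_append_iff.1 hL
  obtain ⟨x, l₃, rfl, rfl, hl₃⟩ := List.map_eq_cons_iff.1 hl₂
  obtain ⟨y, l₄, rfl, rfl, rfl⟩ := List.map_eq_cons_iff.1 hl₃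
  rcases eq_or_ne (g x) (g y) with hxy | hxy
  · exact ⟨_, .refl, by simp [hxy]⟩
  · exact ⟨l₁ ++ y :: x :: l₄, .single ⟨l₁, l₄, x, y, hg x y hxy hab, rfl, rfl⟩, by simp⟩

theorem exists_lift_of_traceMk_map_eq
    (hg : ∀ x y, g x ≠ g y → ¬ G.Adj (g x) (g y) → ¬ G'.Adj x y)
    {L : List W} {M : List V} (h : traceMk G (L.map g) = traceMk G M) :
    ∃ L', traceMk G' L = traceMk G' L' ∧ L'.map g = M := by
  have hr := traceMk_eq_iff_reflTransGen.1 h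
  clear h
  induction hr with
  | refl => exact ⟨L, rfl, rfl⟩
  | tail _ hs ih =>
    obtain ⟨L', hL', rfl⟩ := ih
    obtain ⟨L'', hL'', rfl⟩ := hs.exists_lift hg
    exact ⟨L'', hL'.trans (traceMk_eq_iff_reflTransGen.2 hL''), rfl⟩

end Lift

section InitialAlphabet

variable {V : Type*} {G : SimpleGraph V}

theorem mem_IAset_traceMk_iff {L : List V} {a : V} :
    a ∈ IAset G (traceMk G L) ↔ ∃ M, traceMk G L = traceMk G (M ++ [a]) := by
  constructor
  · rintro ⟨u, hu⟩
    obtain ⟨M, rfl⟩ := traceMk_surjective u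
    exact ⟨M, by rw [hu, traceMk_append]⟩
  · rintro ⟨M, hM⟩
    exact ⟨traceMk G M, by rw [hM, traceMk_append]⟩

theorem eq_of_mem_IAset_of_isClique {s : Set V} (hs : G.IsClique s) {t : TraceMonoid G}
    {a b : V} (ha : a ∈ IAset G t) (hb : b ∈ IAset G t) (has : a ∈ s) (hbs : b ∈ s) :
    a = b := by
  classical
  obtain ⟨L, rfl⟩ := traceMk_surjective t
  obtain ⟨M, hM⟩ := mem_IAset_traceMk_iff.1 ha
  obtain ⟨N, hN⟩ := mem_IAset_traceMk_iff.1 hb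
  have := filter_eq_of_traceMk_eq hs (hM.symm.trans hN)
  simp only [List.filter_append, List.filter_singleton, has, hbs, decide_true, cond_true] at this
  exact (List.append_inj' this rfl).2 |> List.singleton_inj.1

variable [DecidableEq V] {k : V → ℕ} {i : V}

theorem mem_btildeSet_traceMk_iff {L : List V} (hL : ∀ v, L.count v = k v) :
    traceMk G L ∈ BtildeSet G k i ↔ IAset G (traceMk G L) = {i} :=
  ⟨fun ⟨_, _, _, h⟩ => h, fun h => ⟨L, rfl, hL, h⟩⟩

theorem eq_of_mem_btildeSet {t : TraceMonoid G} {i' : V} (h : t ∈ BtildeSet G k i)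
    (h' : t ∈ BtildeSet G k i') : i = i' := by
  obtain ⟨-, -, -, h⟩ := h
  obtain ⟨-, -, -, h'⟩ := h'
  exact Set.singleton_eq_singleton_iff.1 (h.symm.trans h')

theorem btildeSet_finite [Fintype V] (G : SimpleGraph V) (k : V → ℕ) (i : V) :
    (BtildeSet G k i).Finite := by
  refine ((List.finite_length_eq V (∑ v, k v)).image (traceMk G)).subset ?_
  rintro _ ⟨L, rfl, hL, -⟩
  refine ⟨L, ?_, rfl⟩
  have := Multiset.sum_count_eq_card (s := Finset.univ) (m := (L : Multiset V))
    fun _ _ => Finset.mem_univ _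
  simpa [← hL] using this.symm

end InitialAlphabet

theorem List.exists_perm_map_eq_of_map_eq {α β : Type*} [DecidableEq α] {f : α → β}
    {l₁ l₂ : List α} (h₁ : ∀ a, l₁.count a = 1) (h₂ : ∀ a, l₂.count a = 1)
    (h : l₁.map f = l₂.map f) : ∃ σ : Equiv.Perm α, f ∘ σ = f ∧ l₁.map σ = l₂ := by
  have hlen : l₁.length = l₂.length := by simpa using congrArg List.length h
  let σ : Equiv.Perm α := (getEquivOfForallCountEqOne l₁ h₁).symm.trans
    ((finCongr hlen).trans (getEquivOfForallCountEqOne l₂ h₂))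
  have hσ : ∀ n (hn : n < l₁.length), σ l₁[n] = l₂[n] := fun n hn => by
    have : (getEquivOfForallCountEqOne l₁ h₁).symm l₁[n] = ⟨n, hn⟩ :=
      (Equiv.symm_apply_eq _).2 rfl
    simp [σ, this]
  refine ⟨σ, funext fun a => ?_, List.ext_getElem (by simpa using hlen) fun n hn _ => ?_⟩
  · obtain ⟨n, hn, rfl⟩ := List.getElem_of_mem (List.count_pos_iff.1 (h₁ a ▸ Nat.one_pos))
    have := List.getElem_of_eq h (by simpa using hn)
    simp only [List.getElem_map] at this
    simp [hσ, this]
  · simpa using hσ n (by simpa using hn)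

section Join

variable {V : Type*} {G : SimpleGraph V} {k : V → ℕ}

theorem joinGraph_isClique_fiber (j : V) : (joinGraph G k).IsClique {p | p.1 = j} :=
  fun _ hp _ hq hne => Or.inl ⟨hp.trans hq.symm, hne⟩

theorem not_adj_fst_of_not_joinGraph_adj {p q : Σ j, Fin (k j)}
    (h : ¬ (joinGraph G k).Adj p q) : ¬ G.Adj p.1 q.1 :=
  fun h' => h (Or.inr h')

theorem not_joinGraph_adj_of_fst_ne {p q : Σ j, Fin (k j)} (hne : p.1 ≠ q.1)
    (h : ¬ G.Adj p.1 q.1) : ¬ (joinGraph G k).Adj p q := by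
  rintro (⟨h', -⟩ | h')
  exacts [hne h', h h']

theorem joinGraph_adj_perm_iff {σ : Equiv.Perm (Σ j, Fin (k j))}
    (hσ : Sigma.fst ∘ σ = Sigma.fst) {p q : Σ j, Fin (k j)} :
    (joinGraph G k).Adj (σ p) (σ q) ↔ (joinGraph G k).Adj p q := by
  have h : ∀ p, (σ p).1 = p.1 := congrFun hσ
  change ((σ p).1 = (σ q).1 ∧ σ p ≠ σ q) ∨ G.Adj (σ p).1 (σ q).1 ↔
    (p.1 = q.1 ∧ p ≠ q) ∨ G.Adj p.1 q.1
  rw [h, h, σ.injective.ne_iff]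

theorem IAset_traceMk_map_fst (S : List (Σ j, Fin (k j))) :
    IAset G (traceMk G (S.map Sigma.fst)) =
      Sigma.fst '' IAset (joinGraph G k) (traceMk (joinGraph G k) S) := by
  ext j
  constructor
  · intro hj
    obtain ⟨M, hM⟩ := mem_IAset_traceMk_iff.1 hj
    obtain ⟨S', hS', hS'M⟩ :=
      exists_lift_of_traceMk_map_eq (fun _ _ => not_joinGraph_adj_of_fst_ne) hM
    obtain ⟨S'', l, rfl, -, hl⟩ := List.map_eq_append_iff.1 hS'M
    obtain ⟨p, rfl, rfl⟩ := List.map_eq_singleton_iff.1 hl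
    exact ⟨p, mem_IAset_traceMk_iff.2 ⟨S'', hS'⟩, rfl⟩
  · rintro ⟨p, hp, rfl⟩
    obtain ⟨M, hM⟩ := mem_IAset_traceMk_iff.1 hp
    refine mem_IAset_traceMk_iff.2 ⟨M.map Sigma.fst, ?_⟩
    simpa using traceMk_map_eq_of_traceMk_eq (fun _ _ => not_adj_fst_of_not_joinGraph_adj) hM

theorem IAset_traceMk_map_fst_eq_singleton_iff {S : List (Σ j, Fin (k j))} {i : V} :
    IAset G (traceMk G (S.map Sigma.fst)) = {i} ↔
      ∃ r : Fin (k i), IAset (joinGraph G k) (traceMk (joinGraph G k) S) = {⟨i, r⟩} := by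
  rw [IAset_traceMk_map_fst]
  constructor
  · intro h
    obtain ⟨⟨j, r⟩, hp, rfl⟩ := (Set.ext_iff.1 h i).2 rfl
    refine ⟨r, Set.eq_singleton_iff_unique_mem.2 ⟨hp, fun q hq => ?_⟩⟩
    have hqj : q.1 = j := (Set.ext_iff.1 h q.1).1 ⟨q, hq, rfl⟩
    exact eq_of_mem_IAset_of_isClique (joinGraph_isClique_fiber j) hq hp hqj rfl
  · rintro ⟨r, h⟩
    rw [h, Set.image_singleton]

variable [DecidableEq V]

theorem count_map_fst_of_count_eq_one {S : List (Σ j, Fin (k j))} (hS : ∀ p, S.count p = 1)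
    (j : V) : (S.map Sigma.fst).count j = k j := by
  have hnd : S.Nodup := List.nodup_iff_count_eq_one.2 fun p _ => hS p
  have hfiber : (S.filter (·.1 == j)).Perm ((List.finRange (k j)).map (Sigma.mk j)) := by
    refine (List.perm_ext_iff_of_nodup (hnd.filter _)
      ((List.nodup_finRange _).map sigma_mk_injective)).2 fun p => ?_
    obtain ⟨j', r⟩ := p
    simp only [List.mem_filter, List.count_pos_iff.1 (hS _ ▸ Nat.one_pos), List.mem_map,
      List.mem_finRange, true_and, beq_iff_eq, Sigma.mk.inj_iff]
    constructor
    · rintro rfl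
      exact ⟨r, rfl, HEq.rfl⟩
    · rintro ⟨_, rfl, -⟩
      rfl
  rw [List.count_eq_countP, List.countP_map, List.countP_eq_length_filter]
  simpa [Function.comp_def] using hfiber.length_eq

theorem exists_count_eq_one_map_fst_eq [Fintype V] {L : List V} (hL : ∀ v, L.count v = k v) :
    ∃ S : List (Σ j, Fin (k j)), (∀ p, S.count p = 1) ∧ S.map Sigma.fst = L := by
  set U : List (Σ j, Fin (k j)) := Finset.univ.toList
  have hU : ∀ p, U.count p = 1 := fun p =>
    List.count_eq_one_of_mem (Finset.nodup_toList _) (Finset.mem_toList.2 (Finset.mem_univ p))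
  obtain ⟨S, rfl, hSU⟩ : Relation.Comp (· = List.map Sigma.fst ·) List.Perm L U := by
    rw [List.eq_map_comp_perm]
    exact List.perm_iff_count.2 fun v => by rw [hL, count_map_fst_of_count_eq_one hU]
  exact ⟨S, fun p => hSU.count_eq p ▸ hU p, rfl⟩

end Join

section Orbits

variable {V : Type*} [DecidableEq V] {G : SimpleGraph V} {k : V → ℕ} {i : V}

theorem pairwise_disjoint_btildeSet : Pairwise (Function.onFun Disjoint (BtildeSet G k)) :=
  fun _ _ hne => Set.disjoint_left.2 fun _ h h' => hne (eq_of_mem_btildeSet h h')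

theorem traceMk_mem_iUnion_btildeSet_iff {S : List (Σ j, Fin (k j))}
    (hS : ∀ p, S.count p = 1) :
    traceMk (joinGraph G k) S ∈ ⋃ r : Fin (k i), BtildeSet (joinGraph G k) (fun _ => 1) ⟨i, r⟩ ↔
      traceMk G (S.map Sigma.fst) ∈ BtildeSet G k i := by
  simp only [Set.mem_iUnion, mem_btildeSet_traceMk_iff hS,
    mem_btildeSet_traceMk_iff (count_map_fst_of_count_eq_one hS),
    IAset_traceMk_map_fst_eq_singleton_iff]

theorem exists_perm_traceMk_map_eq {S₁ S₂ : List (Σ j, Fin (k j))}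
    (h₁ : ∀ p, S₁.count p = 1) (h₂ : ∀ p, S₂.count p = 1)
    (h : traceMk G (S₁.map Sigma.fst) = traceMk G (S₂.map Sigma.fst)) :
    ∃ σ : Equiv.Perm (Σ j, Fin (k j)), Sigma.fst ∘ σ = Sigma.fst ∧
      traceMk (joinGraph G k) (S₁.map σ) = traceMk (joinGraph G k) S₂ := by
  obtain ⟨S, hS₁S, hS⟩ := exists_lift_of_traceMk_map_eq (fun _ _ => not_joinGraph_adj_of_fst_ne) h
  have hcount : ∀ p, S.count p = 1 := fun p => (perm_of_traceMk_eq hS₁S).count_eq p ▸ h₁ p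
  obtain ⟨σ, hσ, rfl⟩ := List.exists_perm_map_eq_of_map_eq hcount h₂ hS
  exact ⟨σ, hσ, traceMk_map_eq_of_traceMk_eq (fun _ _ => (joinGraph_adj_perm_iff hσ).not.2) hS₁S⟩

theorem perm_eq_of_traceMk_map_eq {S : List (Σ j, Fin (k j))} (hS : ∀ p, p ∈ S)
    {σ τ : Equiv.Perm (Σ j, Fin (k j))} (hσ : Sigma.fst ∘ σ = Sigma.fst)
    (hτ : Sigma.fst ∘ τ = Sigma.fst)
    (h : traceMk (joinGraph G k) (S.map σ) = traceMk (joinGraph G k) (S.map τ)) : σ = τ := by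
  ext1 p
  have hσ' : ∀ q, (σ q).1 = q.1 := congrFun hσ
  have hτ' : ∀ q, (τ q).1 = q.1 := congrFun hτ
  have hfiber := filter_eq_of_traceMk_eq (joinGraph_isClique_fiber p.1) h
  simp only [List.filter_map, Function.comp_def, Set.mem_ofPred_eq, hσ', hτ',
    List.map_inj_left] at hfiber
  exact hfiber p (List.mem_filter.2 ⟨hS p, by simp⟩)

end Orbits

section Counting

variable {V : Type*} [Fintype V] [DecidableEq V] {G : SimpleGraph V} {k : V → ℕ} {i : V}

variable (k) in
/-- The group `S_k = ∏ⱼ S_{k j}`, as the permutations of the vertices of `G(k)` that map every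
clique to itself. -/
abbrev CliquePerm := {σ : Equiv.Perm (Σ j, Fin (k j)) // Sigma.fst ∘ σ = Sigma.fst}

theorem card_cliquePerm : Nat.card (CliquePerm k) = ∏ j, (k j).factorial := by
  rw [Nat.card_eq_fintype_card, DomMulAct.stabilizer_card]
  exact Finset.prod_congr rfl fun j _ => by
    rw [Fintype.card_congr (Equiv.sigmaSubtype j), Fintype.card_fin]

theorem exists_count_eq_one_of_mem_btildeSet {w : TraceMonoid G} (hw : w ∈ BtildeSet G k i) :
    ∃ S : List (Σ j, Fin (k j)), (∀ p, S.count p = 1) ∧ traceMk G (S.map Sigma.fst) = w := by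
  obtain ⟨L, rfl, hL, -⟩ := hw
  obtain ⟨S, hS, rfl⟩ := exists_count_eq_one_map_fst_eq hL
  exact ⟨S, hS, rfl⟩

noncomputable def btildeLift (w : BtildeSet G k i) : List (Σ j, Fin (k j)) :=
  (exists_count_eq_one_of_mem_btildeSet w.2).choose

theorem count_btildeLift (w : BtildeSet G k i) (p : Σ j, Fin (k j)) :
    (btildeLift w).count p = 1 :=
  (exists_count_eq_one_of_mem_btildeSet w.2).choose_spec.1 p

theorem traceMk_map_fst_btildeLift (w : BtildeSet G k i) :
    traceMk G ((btildeLift w).map Sigma.fst) = w :=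
  (exists_count_eq_one_of_mem_btildeSet w.2).choose_spec.2

theorem traceMk_map_btildeLift_mem (σ : CliquePerm k) (w : BtildeSet G k i) :
    traceMk (joinGraph G k) ((btildeLift w).map σ.1) ∈
      ⋃ r : Fin (k i), BtildeSet (joinGraph G k) (fun _ => 1) ⟨i, r⟩ := by
  have hcount : ∀ p, ((btildeLift w).map σ.1).count p = 1 := fun p => by
    rw [← σ.1.apply_symm_apply p, List.count_map_of_injective _ _ σ.1.injective,
      count_btildeLift]
  rw [traceMk_mem_iUnion_btildeSet_iff hcount, List.map_map, σ.2, traceMk_map_fst_btildeLift]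
  exact w.2

noncomputable def orbitMap (x : CliquePerm k × BtildeSet G k i) :
    ⋃ r : Fin (k i), BtildeSet (joinGraph G k) (fun _ => 1) ⟨i, r⟩ :=
  ⟨_, traceMk_map_btildeLift_mem x.1 x.2⟩

theorem orbitMap_injective : Function.Injective (orbitMap (G := G) (k := k) (i := i)) := by
  rintro ⟨σ, w⟩ ⟨τ, w'⟩ h
  replace h := congrArg Subtype.val h
  obtain rfl : w = w' := Subtype.ext <| by
    simpa [σ.2, τ.2, traceMk_map_fst_btildeLift] using
      traceMk_map_eq_of_traceMk_eq (fun _ _ => not_adj_fst_of_not_joinGraph_adj) h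
  have hmem : ∀ p, p ∈ btildeLift w := fun p =>
    List.count_pos_iff.1 (count_btildeLift w p ▸ Nat.one_pos)
  rw [Subtype.ext (perm_eq_of_traceMk_map_eq hmem σ.2 τ.2 h)]

theorem orbitMap_surjective : Function.Surjective (orbitMap (G := G) (k := k) (i := i)) := by
  rintro ⟨t, ht⟩
  obtain ⟨r, S, rfl, hS, -⟩ := Set.mem_iUnion.1 ht
  let w : BtildeSet G k i := ⟨_, (traceMk_mem_iUnion_btildeSet_iff hS).1 ht⟩
  obtain ⟨σ, hσ, hσS⟩ :=
    exists_perm_traceMk_map_eq (count_btildeLift w) hS (traceMk_map_fst_btildeLift w)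
  exact ⟨(⟨σ, hσ⟩, w), Subtype.ext hσS⟩

theorem prod_factorial_mul_card_btildeSet :
    (∏ j, (k j).factorial) * Nat.card (BtildeSet G k i) =
      ∑ r : Fin (k i), Nat.card (BtildeSet (joinGraph G k) (fun _ => 1) ⟨i, r⟩) := by
  have (r : Fin (k i)) : Finite (BtildeSet (joinGraph G k) (fun _ => 1) ⟨i, r⟩) :=
    (btildeSet_finite _ _ _).to_subtype
  rw [← card_cliquePerm, ← Nat.card_prod,
    Nat.card_eq_of_bijective _ ⟨orbitMap_injective, orbitMap_surjective⟩,
    Nat.card_congr (Set.unionEqSigmaOfDisjoint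
      (pairwise_disjoint_btildeSet.comp_of_injective sigma_mk_injective)),
    Nat.card_sigma]

end Counting

theorem stmt9_general {V : Type*} [Fintype V] [DecidableEq V] (G : SimpleGraph V)
    (k : V → ℕ) (i : V) :
    (Nat.card (BtildeSet G k i) : ℚ) =
      (1 / ∏ j : V, (Nat.factorial (k j) : ℚ)) *
        ∑ r : Fin (k i),
          (Nat.card (BtildeSet (joinGraph G k) (fun _ => 1) ⟨i, r⟩) : ℚ) := by
  have hprod : (∏ j, ((k j).factorial : ℚ)) ≠ 0 :=
    Finset.prod_ne_zero_iff.2 fun j _ => Nat.cast_ne_zero.2 (k j).factorial_ne_zero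
  rw [one_div, eq_inv_mul_iff_mul_eq₀ hprod]
  exact_mod_cast prod_factorial_mul_card_btildeSet

/-- `|B̃ⁱ(k,G)| = (1/k!) · Σ_{r=1}^{k i} |B̃^{iʳ}(1, G(k))|`, where `k! = ∏ⱼ (k j)!`
and `iʳ` is the `r`-th vertex of the `i`-th clique of the join graph `G(k)`. -/
theorem stmt9 {V : Type*} [Fintype V] [DecidableEq V] (G : SimpleGraph V)
    (k : V → ℕ) (hk : ∀ v, 0 < k v) (i : V) :
    (Nat.card (BtildeSet G k i) : ℚ) =
      (1 / ∏ j : V, (Nat.factorial (k j) : ℚ)) *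
        ∑ r : Fin (k i),
          (Nat.card (BtildeSet (joinGraph G k) (fun _ => 1) ⟨i, r⟩) : ℚ) :=
  stmt9_general G k i
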